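/- Let a < 0 and c ∈ ℝ, and define F : (0, ∞) → ℝ by F(n) = logit( Φ(a·√n − c) ). Then F′(n) → −a²/2 as n → ∞. -/

import Mathlib

open Real Filter MeasureTheory

/-- The standard normal density `φ(t) = (2π)^{-1/2} exp(-t²/2)`. -/
noncomputable def stdNormalPDF (t : ℝ) : ℝ :=
  (Real.sqrt (2 * Real.pi))⁻¹ * Real.exp (-(t ^ 2) / 2)

/-- The standard normal CDF `Φ(x) = ∫_{-∞}^x φ(t) dt`. -/
noncomputable def stdNormalCDF (x : ℝ) : ℝ :=
  ∫ t in Set.Iic x, stdNormalPDF t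

/-- `logit(x) = log(x) − log(1−x)`. -/
noncomputable def logit (x : ℝ) : ℝ :=
  Real.log x - Real.log (1 - x)

open Set

lemma pdf_pos (t : ℝ) : 0 < stdNormalPDF t :=
  mul_pos (inv_pos.mpr (Real.sqrt_pos.mpr (by positivity))) (Real.exp_pos _)

lemma pdf_cont : Continuous stdNormalPDF := by
  unfold stdNormalPDF; fun_prop

lemma pdf_integrable : Integrable stdNormalPDF := by
  have h : Integrable (fun t : ℝ => Real.exp (-(1/2 : ℝ) * t ^ 2)) :=
    integrable_exp_neg_mul_sq (by norm_num)
  exact (h.const_mul ((Real.sqrt (2*Real.pi))⁻¹)).congr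
    (Eventually.of_forall fun t => by unfold stdNormalPDF; ring_nf)

lemma cdf_sub (x y : ℝ) :
    stdNormalCDF y - stdNormalCDF x = ∫ t in x..y, stdNormalPDF t :=
  intervalIntegral.integral_Iic_sub_Iic pdf_integrable.integrableOn pdf_integrable.integrableOn

lemma cdf_hasDerivAt (x : ℝ) : HasDerivAt stdNormalCDF (stdNormalPDF x) x := by
  have h : HasDerivAt (fun u => ∫ t in (0:ℝ)..u, stdNormalPDF t) (stdNormalPDF x) x :=
    intervalIntegral.integral_hasDerivAt_right (pdf_integrable.intervalIntegrable)
      (pdf_cont.aestronglyMeasurable.stronglyMeasurableAtFilter)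
      pdf_cont.continuousAt
  have e : stdNormalCDF = fun u => stdNormalCDF 0 + ∫ t in (0:ℝ)..u, stdNormalPDF t := by
    funext u; have := cdf_sub 0 u; linarith
  rw [e]; exact h.const_add _

lemma cdf_pos (x : ℝ) : 0 < stdNormalCDF x := by
  have h : stdNormalCDF x - stdNormalCDF (x - 1) = ∫ t in (x-1)..x, stdNormalPDF t :=
    cdf_sub _ _
  have hpos : 0 < ∫ t in (x-1)..x, stdNormalPDF t := by
    apply intervalIntegral.intervalIntegral_pos_of_pos
    · exact pdf_integrable.intervalIntegrable
    · exact pdf_pos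
    · linarith
  have hnn : 0 ≤ stdNormalCDF (x - 1) := by
    unfold stdNormalCDF
    exact setIntegral_nonneg measurableSet_Iic fun t _ => (pdf_pos t).le
  linarith

lemma integral_pdf : ∫ t, stdNormalPDF t = 1 := by
  unfold stdNormalPDF
  rw [MeasureTheory.integral_const_mul]
  have h : (∫ t : ℝ, Real.exp (-(t ^ 2) / 2)) = ∫ t : ℝ, Real.exp (-(1/2 : ℝ) * t ^ 2) := by
    congr 1; funext t; ring_nf
  rw [h, integral_gaussian]
  rw [show Real.pi / (1/2 : ℝ) = 2 * Real.pi by ring]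
  rw [inv_mul_cancel₀]
  positivity

lemma cdf_lt_one (x : ℝ) : stdNormalCDF x < 1 := by
  have h : stdNormalCDF (x+1) - stdNormalCDF x = ∫ t in x..(x+1), stdNormalPDF t :=
    cdf_sub _ _
  have hpos : 0 < ∫ t in x..(x+1), stdNormalPDF t := by
    apply intervalIntegral.intervalIntegral_pos_of_pos
    · exact pdf_integrable.intervalIntegrable
    · exact pdf_pos
    · linarith
  have h2 : stdNormalCDF (x+1) ≤ 1 := by
    rw [← integral_pdf]
    exact setIntegral_le_integral pdf_integrable (Eventually.of_forall fun t => (pdf_pos t).le)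
  linarith

lemma cdf_tendsto_atBot : Tendsto stdNormalCDF atBot (nhds 0) := by
  have h := MeasureTheory.intervalIntegral_tendsto_integral_Iic (0:ℝ)
    pdf_integrable.integrableOn tendsto_id
  have e : ∀ a : ℝ, stdNormalCDF a = stdNormalCDF 0 - ∫ t in a..(0:ℝ), stdNormalPDF t := by
    intro a; have := cdf_sub a 0; linarith
  have h2 : Tendsto (fun a : ℝ => stdNormalCDF 0 - ∫ t in a..(0:ℝ), stdNormalPDF t)
      atBot (nhds (stdNormalCDF 0 - stdNormalCDF 0)) := by
    exact (tendsto_const_nhds.sub h)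
  rw [show (0:ℝ) = stdNormalCDF 0 - stdNormalCDF 0 by ring]
  exact h2.congr fun a => (e a).symm

lemma pdf_hasDerivAt (t : ℝ) :
    HasDerivAt stdNormalPDF (-t * stdNormalPDF t) t := by
  have h1 : HasDerivAt (fun s : ℝ => -(s^2)/2) (-t) t := by
    have h := ((hasDerivAt_pow 2 t).neg.div_const 2)
    refine h.congr_deriv ?_
    simp
    ring
  have h2 := (h1.exp.const_mul ((Real.sqrt (2*Real.pi))⁻¹))
  unfold stdNormalPDF
  refine h2.congr_deriv ?_
  ring

lemma pdf_tendsto_atBot : Tendsto stdNormalPDF atBot (nhds 0) := by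
  have hsq : Tendsto (fun t : ℝ => t^2) atBot atTop := by
    have h : Tendsto (fun t : ℝ => (-t)^2) atBot atTop :=
      (tendsto_pow_atTop two_ne_zero).comp tendsto_neg_atBot_atTop
    exact h.congr fun t => by ring
  have harg : Tendsto (fun t : ℝ => -(t^2)/2) atBot atBot := by
    apply Tendsto.atBot_div_const (by norm_num : (0:ℝ) < 2)
    exact tendsto_neg_atTop_atBot.comp hsq
  have hexp := Real.tendsto_exp_atBot.comp harg
  have h := hexp.const_mul ((Real.sqrt (2*Real.pi))⁻¹)
  rw [mul_zero] at h
  exact h.congr fun t => rfl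

lemma cdf_le (u : ℝ) (hu : u < 0) :
    stdNormalCDF u ≤ stdNormalPDF u / (-u) := by
  set k : ℝ → ℝ := fun t => stdNormalPDF t / (-t) - stdNormalCDF t with hk
  have hderiv : ∀ t : ℝ, t < 0 → HasDerivAt k (stdNormalPDF t / t^2) t := by
    intro t ht
    have htne : t ≠ 0 := ht.ne
    have hne : -t ≠ 0 := neg_ne_zero.mpr htne
    have hinv : HasDerivAt (fun s : ℝ => (-s)⁻¹) ((t^2)⁻¹) t := by
      have h := ((hasDerivAt_id t).neg.inv hne)
      refine h.congr_deriv ?_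
      simp only [Pi.neg_apply, id_eq, neg_sq]
      field_simp
    have hmul := (pdf_hasDerivAt t).mul hinv
    have h2 := hmul.sub (cdf_hasDerivAt t)
    have e : (-t * stdNormalPDF t * (-t)⁻¹ + stdNormalPDF t * (t ^ 2)⁻¹) - stdNormalPDF t
        = stdNormalPDF t / t^2 := by
      field_simp
      ring
    rw [e] at h2
    exact h2.congr_of_eventuallyEq (by
      filter_upwards with s
      simp [hk, div_eq_mul_inv])
  have hmono : MonotoneOn k (Iio (0:ℝ)) := by
    apply monotoneOn_of_deriv_nonneg (convex_Iio 0)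
    · intro t ht
      exact (hderiv t ht).continuousAt.continuousWithinAt
    · intro t ht
      rw [interior_Iio] at ht
      exact (hderiv t ht).differentiableAt.differentiableWithinAt
    · intro t ht
      rw [interior_Iio] at ht
      rw [(hderiv t ht).deriv]
      exact div_nonneg (pdf_pos t).le (sq_nonneg t)
  have hlim : Tendsto k atBot (nhds 0) := by
    have h1 : Tendsto (fun t : ℝ => stdNormalPDF t / (-t)) atBot (nhds 0) := by
      apply squeeze_zero' (g := stdNormalPDF)
      · filter_upwards [eventually_lt_atBot (-1 : ℝ)] with t ht
        exact div_nonneg (pdf_pos t).le (by linarith)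
      · filter_upwards [eventually_lt_atBot (-1 : ℝ)] with t ht
        rw [div_le_iff₀ (by linarith)]
        nlinarith [pdf_pos t]
      · exact pdf_tendsto_atBot
    simpa [hk] using h1.sub cdf_tendsto_atBot
  have h0 : (0:ℝ) ≤ k u := by
    apply le_of_tendsto hlim
    filter_upwards [eventually_le_atBot u, eventually_lt_atBot (0:ℝ)] with t ht ht0
    exact hmono ht0 hu ht
  simp only [hk] at h0
  linarith

lemma cdf_ge (u : ℝ) :
    (-u) * stdNormalPDF u / (u^2+1) ≤ stdNormalCDF u := by
  set m : ℝ → ℝ := fun t => stdNormalCDF t - (-t) * stdNormalPDF t / (t^2+1) with hm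
  have hderiv : ∀ t : ℝ,
      HasDerivAt m (2 * stdNormalPDF t / (t^2+1)^2) t := by
    intro t
    have hne : (t:ℝ)^2 + 1 ≠ 0 := by positivity
    have h1 : HasDerivAt (fun s : ℝ => -s * stdNormalPDF s)
        ((-1) * stdNormalPDF t + (-t) * (-t * stdNormalPDF t)) t :=
      ((hasDerivAt_id t).neg.mul (pdf_hasDerivAt t))
    have h2 : HasDerivAt (fun s : ℝ => ((s:ℝ)^2+1)⁻¹)
        (-(2 * t^(1:ℕ)) / ((t^2+1)^2)) t := by
      have := ((hasDerivAt_pow 2 t).add_const 1).inv hne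
      exact this.congr_deriv (by simp)
    have h3 := (cdf_hasDerivAt t).sub (h1.mul h2)
    have e : stdNormalPDF t -
        (((-1) * stdNormalPDF t + (-t) * (-t * stdNormalPDF t)) * ((t:ℝ)^2+1)⁻¹
          + (-t * stdNormalPDF t) * (-(2 * t^(1:ℕ)) / ((t^2+1)^2)))
        = 2 * stdNormalPDF t / (t^2+1)^2 := by
      field_simp
      ring
    rw [e] at h3
    exact h3.congr_of_eventuallyEq (by
      filter_upwards with s
      simp [hm, div_eq_mul_inv, mul_comm])
  have hmono : Monotone m := by
    apply monotone_of_deriv_nonneg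
    · exact fun t => (hderiv t).differentiableAt
    · intro t
      rw [(hderiv t).deriv]
      exact div_nonneg (by linarith [pdf_pos t]) (by positivity)
  have hlim : Tendsto m atBot (nhds 0) := by
    have h1 : Tendsto (fun t : ℝ => (-t) * stdNormalPDF t / (t^2+1)) atBot (nhds 0) := by
      apply squeeze_zero' (g := stdNormalPDF)
      · filter_upwards [eventually_lt_atBot (0 : ℝ)] with t ht
        exact div_nonneg (mul_nonneg (by linarith) (pdf_pos t).le) (by positivity)
      · filter_upwards with t
        rw [div_le_iff₀ (by positivity)]
        nlinarith [pdf_pos t, sq_nonneg (t+1)]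
      · exact pdf_tendsto_atBot
    simpa [hm] using cdf_tendsto_atBot.sub h1
  have h0 : (0:ℝ) ≤ m u := by
    apply le_of_tendsto hlim
    filter_upwards [eventually_le_atBot u] with t ht
    exact hmono ht
  simp only [hm] at h0
  linarith

lemma F_hasDerivAt (a c : ℝ) (n : ℝ) (hn : 0 < n) :
    HasDerivAt (fun n : ℝ => logit (stdNormalCDF (a * Real.sqrt n - c)))
      ((stdNormalPDF (a * Real.sqrt n - c) / stdNormalCDF (a * Real.sqrt n - c)
        + stdNormalPDF (a * Real.sqrt n - c) / (1 - stdNormalCDF (a * Real.sqrt n - c)))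
        * (a / (2 * Real.sqrt n))) n := by
  have hsn : (0:ℝ) < Real.sqrt n := Real.sqrt_pos.mpr hn
  set u := a * Real.sqrt n - c with hu_def
  have hsq : HasDerivAt Real.sqrt (1 / (2 * Real.sqrt n)) n := Real.hasDerivAt_sqrt hn.ne'
  have hu : HasDerivAt (fun x : ℝ => a * Real.sqrt x - c) (a * (1 / (2 * Real.sqrt n))) n :=
    (hsq.const_mul a).sub_const c
  have hPhi : HasDerivAt (fun x : ℝ => stdNormalCDF (a * Real.sqrt x - c))
      (stdNormalPDF u * (a * (1 / (2 * Real.sqrt n)))) n :=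
    by have := (cdf_hasDerivAt u).comp n hu; exact this
  have h1 : HasDerivAt (fun x : ℝ => Real.log (stdNormalCDF (a * Real.sqrt x - c)))
      ((stdNormalPDF u * (a * (1 / (2 * Real.sqrt n)))) / stdNormalCDF u) n :=
    hPhi.log (cdf_pos u).ne'
  have h2 : HasDerivAt (fun x : ℝ => 1 - stdNormalCDF (a * Real.sqrt x - c))
      (-(stdNormalPDF u * (a * (1 / (2 * Real.sqrt n))))) n := hPhi.const_sub 1
  have h3 := h2.log (sub_pos.mpr (cdf_lt_one u)).ne'
  have h4 := h1.sub h3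
  refine h4.congr_deriv ?_
  have hc1 : stdNormalCDF u ≠ 0 := (cdf_pos u).ne'
  have hc2 : 1 - stdNormalCDF u ≠ 0 := (sub_pos.mpr (cdf_lt_one u)).ne'
  rw [← hu_def]
  field_simp
  ring

/-- Let `a < 0` and `c ∈ ℝ`, and let `F(n) = logit(Φ(a·√n − c))`.
Then `F′(n) → −a²/2` as `n → ∞`. -/
theorem tendsto_deriv_logit_neg (a c : ℝ) (ha : a < 0) :
    Tendsto (deriv fun n : ℝ => logit (stdNormalCDF (a * Real.sqrt n - c))) atTop
      (nhds (-(a ^ 2) / 2)) := by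
  have hsqrt : Tendsto Real.sqrt atTop atTop := by
    apply tendsto_atTop_atTop.mpr
    intro b
    refine ⟨b^2, fun x hx => ?_⟩
    calc b ≤ |b| := le_abs_self b
      _ = Real.sqrt (b^2) := (Real.sqrt_sq_eq_abs b).symm
      _ ≤ Real.sqrt x := Real.sqrt_le_sqrt hx
  have hu : Tendsto (fun n : ℝ => a * Real.sqrt n - c) atTop atBot := by
    apply tendsto_atBot_add_const_right _ (-c)
    exact (Tendsto.const_mul_atTop_of_neg ha hsqrt)
  have hnegu : Tendsto (fun n : ℝ => -(a * Real.sqrt n - c)) atTop atTop :=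
    tendsto_neg_atBot_atTop.comp hu
  have h2s : Tendsto (fun n : ℝ => 2 * Real.sqrt n) atTop atTop :=
    Tendsto.const_mul_atTop two_pos hsqrt
  have hs : Tendsto (fun n : ℝ => a / (2 * Real.sqrt n)) atTop (nhds 0) :=
    tendsto_const_nhds.div_atTop h2s
  have hphiu : Tendsto (fun n : ℝ => stdNormalPDF (a * Real.sqrt n - c)) atTop (nhds 0) :=
    pdf_tendsto_atBot.comp hu
  have hPhiu : Tendsto (fun n : ℝ => stdNormalCDF (a * Real.sqrt n - c)) atTop (nhds 0) :=
    cdf_tendsto_atBot.comp hu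
  -- term 2
  have hden : Tendsto (fun n : ℝ => 1 - stdNormalCDF (a * Real.sqrt n - c)) atTop (nhds 1) := by
    simpa using tendsto_const_nhds.sub hPhiu
  have hterm2 : Tendsto (fun n : ℝ =>
      stdNormalPDF (a * Real.sqrt n - c) / (1 - stdNormalCDF (a * Real.sqrt n - c))
        * (a / (2 * Real.sqrt n))) atTop (nhds 0) := by
    have := (hphiu.div hden one_ne_zero).mul hs
    simpa using this
  -- bounds for term 1
  have hhi : Tendsto (fun n : ℝ => -(a * Real.sqrt n - c) * (a / (2 * Real.sqrt n))) atTop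
      (nhds (-(a^2)/2)) := by
    have htail : Tendsto (fun n : ℝ => a * c / (2 * Real.sqrt n) - a^2/2) atTop
        (nhds (0 - a^2/2)) :=
      (tendsto_const_nhds.div_atTop h2s).sub_const _
    rw [show (0:ℝ) - a^2/2 = -(a^2)/2 by ring] at htail
    apply htail.congr'
    filter_upwards [eventually_gt_atTop (0:ℝ)] with n hn
    have hsn : (0:ℝ) < Real.sqrt n := Real.sqrt_pos.mpr hn
    field_simp
    ring
  have hextra : Tendsto (fun n : ℝ =>
      (1 / (-(a * Real.sqrt n - c))) * (a / (2 * Real.sqrt n))) atTop (nhds 0) := by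
    have h1 : Tendsto (fun n : ℝ => 1 / (-(a * Real.sqrt n - c))) atTop (nhds 0) :=
      tendsto_const_nhds.div_atTop hnegu
    simpa using h1.mul hs
  have hlo : Tendsto (fun n : ℝ =>
      (((a * Real.sqrt n - c)^2 + 1) / (-(a * Real.sqrt n - c))) * (a / (2 * Real.sqrt n)))
      atTop (nhds (-(a^2)/2)) := by
    have hsum := hhi.add hextra
    rw [add_zero] at hsum
    apply hsum.congr'
    filter_upwards [hu.eventually (eventually_lt_atBot (0:ℝ)), eventually_gt_atTop (0:ℝ)]
      with n hn hn0
    have hsn : (0:ℝ) < Real.sqrt n := Real.sqrt_pos.mpr hn0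
    have hne : -(a * Real.sqrt n - c) ≠ 0 := by
      rw [neg_ne_zero]; exact hn.ne
    have key : ((a * Real.sqrt n - c)^2 + 1) / (-(a * Real.sqrt n - c))
        = -(a * Real.sqrt n - c) + 1 / (-(a * Real.sqrt n - c)) := by
      rw [div_eq_iff hne, add_mul, one_div, inv_mul_cancel₀ hne]
      ring
    rw [key, add_mul]
  -- term 1 by squeeze
  have hterm1 : Tendsto (fun n : ℝ =>
      stdNormalPDF (a * Real.sqrt n - c) / stdNormalCDF (a * Real.sqrt n - c)
        * (a / (2 * Real.sqrt n))) atTop (nhds (-(a^2)/2)) := by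
    apply tendsto_of_tendsto_of_tendsto_of_le_of_le' hlo hhi
    · filter_upwards [hu.eventually (eventually_lt_atBot (0:ℝ)), eventually_gt_atTop (0:ℝ)]
        with n hun hn
      set u := a * Real.sqrt n - c
      have hsn : (0:ℝ) < Real.sqrt n := Real.sqrt_pos.mpr hn
      have hsneg : a / (2 * Real.sqrt n) ≤ 0 :=
        (div_neg_of_neg_of_pos ha (by linarith)).le
      have hnu : (0:ℝ) < -u := by linarith
      have hP := cdf_pos u
      have hphi := pdf_pos u
      have hge := cdf_ge u
      -- φ/Φ ≤ (u²+1)/(−u)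
      have hratio : stdNormalPDF u / stdNormalCDF u ≤ (u^2+1) / (-u) := by
        rw [div_le_div_iff₀ hP hnu]
        have := (div_le_iff₀ (by positivity : (0:ℝ) < u^2+1)).mp hge
        nlinarith
      exact mul_le_mul_of_nonpos_right hratio hsneg
    · filter_upwards [hu.eventually (eventually_lt_atBot (0:ℝ)), eventually_gt_atTop (0:ℝ)]
        with n hun hn
      set u := a * Real.sqrt n - c
      have hsn : (0:ℝ) < Real.sqrt n := Real.sqrt_pos.mpr hn
      have hsneg : a / (2 * Real.sqrt n) ≤ 0 :=
        (div_neg_of_neg_of_pos ha (by linarith)).le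
      have hnu : (0:ℝ) < -u := by linarith
      have hP := cdf_pos u
      have hle := cdf_le u hun
      -- −u ≤ φ/Φ
      have hratio : -u ≤ stdNormalPDF u / stdNormalCDF u := by
        rw [le_div_iff₀ hP]
        have := (le_div_iff₀ hnu).mp hle
        nlinarith
      exact mul_le_mul_of_nonpos_right hratio hsneg
  -- combine
  have hfinal : Tendsto (fun n : ℝ =>
      (stdNormalPDF (a * Real.sqrt n - c) / stdNormalCDF (a * Real.sqrt n - c)
        + stdNormalPDF (a * Real.sqrt n - c) / (1 - stdNormalCDF (a * Real.sqrt n - c)))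
        * (a / (2 * Real.sqrt n))) atTop (nhds (-(a^2)/2)) := by
    have hsum := hterm1.add hterm2
    rw [add_zero] at hsum
    exact Tendsto.congr (fun n => by ring) hsum
  apply hfinal.congr'
  filter_upwards [eventually_gt_atTop (0:ℝ)] with n hn
  exact ((F_hasDerivAt a c n hn).deriv).symm
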